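/- For any two density matrices ρ₁, ρ₂, the fidelity F(ρ₁,ρ₂) = (tr√(√ρ₁ ρ₂ √ρ₁))² satisfies F(ρ₁,ρ₂) ≥ tr(ρ₁ρ₂). -/

import Mathlib

open Matrix ComplexOrder

attribute [local instance] Classical.propDecidable

/-- The square root of a positive semidefinite matrix, as defined in Mathlib (Dec 2024). -/
noncomputable def Matrix.PosSemidef.sqrt {n : Type*} [Fintype n] [DecidableEq n] {A : Matrix n n ℂ}
    (hA : A.PosSemidef) : Matrix n n ℂ :=
  hA.1.eigenvectorUnitary.1 * diagonal ((↑) ∘ (√·) ∘ hA.1.eigenvalues) *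
    (star hA.1.eigenvectorUnitary : Matrix n n ℂ)

/-- Fidelity `F(ρ₁,ρ₂) = (tr √(√ρ₁ ρ₂ √ρ₁))²` (0 when not defined). -/
noncomputable def fid {n : Type*} [Fintype n] [DecidableEq n] (ρ₁ ρ₂ : Matrix n n ℂ) : ℝ :=
  if h1 : ρ₁.PosSemidef then
    if h2 : (h1.sqrt * ρ₂ * h1.sqrt).PosSemidef then (h2.sqrt.trace).re ^ 2 else 0
  else 0

/-!
Write `M = √ρ₁ ρ₂ √ρ₁` and `S = √M`. By cyclicity of the trace `tr(ρ₁ρ₂) = tr M = tr(S²)`, while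
`F(ρ₁,ρ₂) = (tr S)²`. For the positive semidefinite `S` with eigenvalues `λᵢ ≥ 0` this is
`∑ λᵢ² ≤ (∑ λᵢ)²`.
-/

open scoped MatrixOrder

namespace Matrix

variable {n 𝕜 : Type*} [Fintype n] [DecidableEq n] [RCLike 𝕜]

lemma IsHermitian.trace_cfc {A : Matrix n n 𝕜} (hA : A.IsHermitian) (f : ℝ → ℝ) :
    (hA.cfc f).trace = ∑ i, (f (hA.eigenvalues i) : 𝕜) := by
  rw [IsHermitian.cfc, Unitary.conjStarAlgAut_apply, trace_mul_cycle, Unitary.coe_star_mul_self,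
    one_mul, trace_diagonal]
  rfl

lemma IsHermitian.trace_mul_self {A : Matrix n n 𝕜} (hA : A.IsHermitian) :
    (A * A).trace = ∑ i, (hA.eigenvalues i ^ 2 : 𝕜) := by
  have hsq : A * A = cfc (fun x : ℝ ↦ x ^ 2) A := by
    rw [cfc_pow_id A 2 hA.isSelfAdjoint, sq]
  rw [hsq, hA.cfc_eq, hA.trace_cfc]
  simp

lemma PosSemidef.re_trace_mul_self_le_sq {A : Matrix n n 𝕜} (hA : A.PosSemidef) :
    RCLike.re (A * A).trace ≤ RCLike.re A.trace ^ 2 := by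
  rw [hA.1.trace_mul_self, hA.1.trace_eq_sum_eigenvalues]
  simp only [map_sum, ← RCLike.ofReal_pow, RCLike.ofReal_re]
  exact Finset.sum_sq_le_sq_sum_of_nonneg fun i _ ↦ hA.eigenvalues_nonneg i

lemma PosSemidef.sqrt_eq_cfc_sqrt {A : Matrix n n ℂ} (hA : A.PosSemidef) :
    hA.sqrt = CFC.sqrt A := by
  rw [CFC.sqrt_eq_real_sqrt A hA.nonneg, cfcₙ_eq_cfc, hA.1.cfc_eq]
  rfl

lemma PosSemidef.posSemidef_sqrt {A : Matrix n n ℂ} (hA : A.PosSemidef) : hA.sqrt.PosSemidef :=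
  hA.sqrt_eq_cfc_sqrt ▸ (CFC.sqrt_nonneg A).posSemidef

lemma PosSemidef.sqrt_mul_self {A : Matrix n n ℂ} (hA : A.PosSemidef) : hA.sqrt * hA.sqrt = A :=
  hA.sqrt_eq_cfc_sqrt ▸ CFC.sqrt_mul_sqrt_self A hA.nonneg

lemma PosSemidef.sqrt_mul_mul_sqrt {A B : Matrix n n ℂ} (hA : A.PosSemidef) (hB : B.PosSemidef) :
    (hA.sqrt * B * hA.sqrt).PosSemidef := by
  simpa only [hA.posSemidef_sqrt.isHermitian.eq] using hB.mul_mul_conjTranspose_same hA.sqrt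

end Matrix

theorem trace_prod_le_fidelity_general {N : ℕ} (ρ₁ ρ₂ : Matrix (Fin N) (Fin N) ℂ)
    (h1 : ρ₁.PosSemidef) (h2 : ρ₂.PosSemidef) :
    ((ρ₁ * ρ₂).trace).re ≤ fid ρ₁ ρ₂ := by
  have hM := h1.sqrt_mul_mul_sqrt h2
  have htr : (ρ₁ * ρ₂).trace = (hM.sqrt * hM.sqrt).trace := by
    conv_lhs => rw [← h1.sqrt_mul_self]
    rw [← trace_mul_cycle, hM.sqrt_mul_self]
  rw [fid, dif_pos h1, dif_pos hM, htr]
  exact hM.posSemidef_sqrt.re_trace_mul_self_le_sq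

theorem trace_prod_le_fidelity {N : ℕ} (ρ₁ ρ₂ : Matrix (Fin N) (Fin N) ℂ)
    (h1 : ρ₁.PosSemidef) (h2 : ρ₂.PosSemidef)
    (t1 : ρ₁.trace = 1) (t2 : ρ₂.trace = 1) :
    ((ρ₁ * ρ₂).trace).re ≤ fid ρ₁ ρ₂ :=
  trace_prod_le_fidelity_general ρ₁ ρ₂ h1 h2
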